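/- Chain of information-rate inequalities: in the general compound channel setting with per-symbol alphabets A_n = 𝒳ⁿ and B_n = 𝒴ⁿ for fixed nonempty finite sets 𝒳 and 𝒴, and assuming cinf I(X;Y) and csup I(X;Y) are finite, one has cinf I(X;Y) ≤ liminf_{n→∞} inf_{s∈S} (1/n)·I(X^n;Y^n|s) ≤ limsup_{n→∞} sup_{s∈S} (1/n)·I(X^n;Y^n|s) ≤ csup I(X;Y). -/

import Mathlib

/-!
Write `(1/n) I(Xⁿ;Yⁿ|s)` as the expectation of the information density rate `Z_{n,s}` and split
it at a threshold `R`. On any event the contribution is at least `-1/(n e)`, by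
`t log (u/t) ≤ u/e`; on `{Z ≥ R}` it is at most `(1/n) log |Aₙ| · P(Z ≥ R) + 1/(n e)`, because
`p(x) W(y|x) ≤ q(y)` bounds the density by `-log p(x)`, and `-t log t ≤ t m + e^{-m-1}` with
`m = log |Aₙ|`. Hence `(1/n) I` lies between `R (1 - P(Z ≤ R)) - 1/(n e)` and
`R (1 - P(Z ≥ R)) + log |𝒳| · P(Z ≥ R) + 1/(n e)` for every `s`; for `R` in the sets defining
`cinf I` and `csup I` these probabilities vanish uniformly in `s`.
-/

open Filter
open scoped ENNReal

noncomputable section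

variable {S : Type*} {A B : ℕ → Type*}

/-- Output distribution `q_{n,s}(y) = Σ_x p_n(x)·W_{n,s}(x)(y)`. -/
def outDist [∀ n, Fintype (A n)] (p : ∀ n, PMF (A n)) (W : ∀ n, S → A n → PMF (B n))
    (n : ℕ) (s : S) (y : B n) : ℝ≥0∞ :=
  ∑ x : A n, p n x * W n s x y

/-- Information density rate `Z_{n,s}(x,y) = (1/n)·ln(W_{n,s}(x)(y)/q_{n,s}(y))`. -/
def infoDensRate [∀ n, Fintype (A n)] (p : ∀ n, PMF (A n)) (W : ∀ n, S → A n → PMF (B n))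
    (n : ℕ) (s : S) (z : A n × B n) : ℝ :=
  (1 / (n : ℝ)) * Real.log ((W n s z.1 z.2).toReal / (outDist p W n s z.2).toReal)

/-- Probability of an event for the pair `(Xⁿ,Yⁿ) ∼ p_n ⊗ W_{n,s}`. -/
def probEvent [∀ n, Fintype (A n)] [∀ n, Fintype (B n)]
    (p : ∀ n, PMF (A n)) (W : ∀ n, S → A n → PMF (B n)) (n : ℕ) (s : S)
    (E : Set (A n × B n)) : ℝ≥0∞ :=
  ∑ z : A n × B n, E.indicator (fun z' => p n z'.1 * W n s z'.1 z'.2) z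

/-- The set whose supremum is the compound inf-information rate. -/
def cinfISet [∀ n, Fintype (A n)] [∀ n, Fintype (B n)]
    (p : ∀ n, PMF (A n)) (W : ∀ n, S → A n → PMF (B n)) : Set ℝ :=
  {R : ℝ | Tendsto (fun n => ⨆ s : S,
      probEvent p W n s {z | infoDensRate p W n s z ≤ R}) atTop (nhds 0)}

/-- The compound inf-information rate `cinf I(X;Y)`. -/
def cinfI [∀ n, Fintype (A n)] [∀ n, Fintype (B n)]
    (p : ∀ n, PMF (A n)) (W : ∀ n, S → A n → PMF (B n)) : ℝ := sSup (cinfISet p W)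

/-- The set whose infimum is the compound sup-information rate. -/
def csupISet [∀ n, Fintype (A n)] [∀ n, Fintype (B n)]
    (p : ∀ n, PMF (A n)) (W : ∀ n, S → A n → PMF (B n)) : Set ℝ :=
  {R : ℝ | Tendsto (fun n => ⨆ s : S,
      probEvent p W n s {z | R ≤ infoDensRate p W n s z}) atTop (nhds 0)}

/-- The compound sup-information rate `csup I(X;Y)`. -/
def csupI [∀ n, Fintype (A n)] [∀ n, Fintype (B n)]
    (p : ∀ n, PMF (A n)) (W : ∀ n, S → A n → PMF (B n)) : ℝ := sInf (csupISet p W)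

/-- Mutual information `I(Xⁿ;Yⁿ|s)`. -/
def mutualInfo [∀ n, Fintype (A n)] [∀ n, Fintype (B n)]
    (p : ∀ n, PMF (A n)) (W : ∀ n, S → A n → PMF (B n)) (n : ℕ) (s : S) : ℝ :=
  ∑ x : A n, ∑ y : B n, (p n x * W n s x y).toReal *
    Real.log ((W n s x y).toReal / (outDist p W n s y).toReal)

open Real Finset
open scoped Topology

namespace Real

lemma log_le_div_exp_one {x : ℝ} (hx : 0 ≤ x) : log x ≤ x / exp 1 := by
  rcases hx.eq_or_lt with rfl | hx
  · simp
  have h := log_le_sub_one_of_pos (div_pos hx (exp_pos 1))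
  rw [log_div hx.ne' (exp_pos 1).ne', log_exp] at h
  linarith

lemma mul_log_div_le {t u : ℝ} (ht : 0 ≤ t) (hu : 0 ≤ u) : t * log (u / t) ≤ u / exp 1 := by
  rcases ht.eq_or_lt with rfl | ht
  · simp; positivity
  calc t * log (u / t) ≤ t * (u / t / exp 1) :=
        mul_le_mul_of_nonneg_left (log_le_div_exp_one (by positivity)) ht.le
    _ = u / exp 1 := by field_simp

lemma neg_mul_div_exp_one_le_mul_mul_log_div {a w q : ℝ} (ha : 0 ≤ a) (hw : 0 ≤ w)
    (hq : 0 ≤ q) : -(a * q / exp 1) ≤ a * w * log (w / q) := by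
  have h := mul_le_mul_of_nonneg_left (mul_log_div_le hw hq) ha
  rw [← inv_div, log_inv] at h
  calc -(a * q / exp 1) = -(a * (q / exp 1)) := by ring
    _ ≤ -(a * (w * -log (w / q))) := neg_le_neg h
    _ = a * w * log (w / q) := by ring

/-- Since `a * w ≤ q`, `log (w / q) ≤ -log a`, and `-a * log a ≤ a * m + exp (-m) / exp 1`. -/
lemma mul_mul_log_div_le {a w q : ℝ} (ha : 0 ≤ a) (hw : 0 ≤ w) (haw : a * w ≤ q) (m : ℝ) :
    a * w * log (w / q) ≤ a * w * m + w * (exp (-m) / exp 1) := by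
  rcases (mul_nonneg ha hw).eq_or_lt with h | h
  · rw [← h, zero_mul, zero_mul, zero_add]; positivity
  have ha : 0 < a := pos_of_mul_pos_left h hw
  have hw : 0 < w := pos_of_mul_pos_right h ha.le
  have hlog : log (w / q) ≤ -log a := by
    rw [← log_inv]
    exact log_le_log (div_pos hw (h.trans_le haw)) <| by
      rw [div_le_iff₀ (h.trans_le haw)]; field_simp; linarith
  have hent : a * -log a ≤ a * m + exp (-m) / exp 1 := by
    have := mul_log_div_le ha.le (exp_pos (-m)).le
    rw [log_div (exp_pos _).ne' ha.ne', log_exp] at this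
    linarith
  calc a * w * log (w / q) ≤ w * (a * -log a) := by
        nlinarith [mul_le_mul_of_nonneg_left hlog (mul_nonneg ha.le hw.le)]
    _ ≤ w * (a * m + exp (-m) / exp 1) := mul_le_mul_of_nonneg_left hent hw.le
    _ = a * w * m + w * (exp (-m) / exp 1) := by ring

lemma mul_exp_neg_log_le_one {x : ℝ} (hx : 0 ≤ x) : x * exp (-log x) ≤ 1 := by
  rcases hx.eq_or_lt with rfl | hx
  · simp
  rw [exp_neg, exp_log hx, mul_inv_cancel₀ hx.ne']

end Real

lemma PMF.sum_toReal_eq_one {α : Type*} [Fintype α] (P : PMF α) : ∑ x, (P x).toReal = 1 := by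
  rw [← ENNReal.toReal_sum fun x _ => P.apply_ne_top x,
    ← tsum_fintype (L := SummationFilter.unconditional _), P.tsum_coe, ENNReal.toReal_one]

section JointLaw

variable (p : ∀ n, PMF (A n)) (W : ∀ n, S → A n → PMF (B n)) (n : ℕ) (s : S)

def jointProb (z : A n × B n) : ℝ := (p n z.1).toReal * (W n s z.1 z.2).toReal

lemma jointProb_nonneg (z : A n × B n) : 0 ≤ jointProb p W n s z := by
  unfold jointProb; positivity

end JointLaw

section OutputLaw

variable [∀ n, Fintype (A n)] (p : ∀ n, PMF (A n)) (W : ∀ n, S → A n → PMF (B n)) (n : ℕ)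
  (s : S)

def infoDens (z : A n × B n) : ℝ :=
  log ((W n s z.1 z.2).toReal / (outDist p W n s z.2).toReal)

lemma outDist_toReal (y : B n) :
    (outDist p W n s y).toReal = ∑ x, jointProb p W n s (x, y) := by
  rw [outDist, ENNReal.toReal_sum fun x _ => ENNReal.mul_ne_top (PMF.apply_ne_top _ _)
    (PMF.apply_ne_top _ _)]
  simp only [ENNReal.toReal_mul, jointProb]

lemma jointProb_le_outDist (z : A n × B n) :
    jointProb p W n s z ≤ (outDist p W n s z.2).toReal := by
  rw [outDist_toReal]
  exact single_le_sum (f := fun x => jointProb p W n s (x, z.2))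
    (fun x _ => jointProb_nonneg p W n s _) (mem_univ z.1)

lemma sum_jointProb_mul_infoDensRate (F : Finset (A n × B n)) :
    ∑ z ∈ F, jointProb p W n s z * infoDensRate p W n s z =
      1 / (n : ℝ) * ∑ z ∈ F, jointProb p W n s z * infoDens p W n s z := by
  rw [mul_sum]
  exact sum_congr rfl fun z _ => by unfold infoDensRate infoDens; ring

end OutputLaw

section Blocklength

variable [∀ n, Fintype (A n)] [∀ n, Fintype (B n)] (p : ∀ n, PMF (A n))
  (W : ∀ n, S → A n → PMF (B n)) (n : ℕ) (s : S)

def mutualInfoRate : ℝ := 1 / (n : ℝ) * mutualInfo p W n s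

lemma sum_jointProb : ∑ z, jointProb p W n s z = 1 := by
  simp [jointProb, Fintype.sum_prod_type, ← mul_sum, PMF.sum_toReal_eq_one]

lemma sum_outDist_toReal : ∑ y, (outDist p W n s y).toReal = 1 := by
  simp_rw [outDist_toReal]
  rw [sum_comm, ← Fintype.sum_prod_type', sum_jointProb]

lemma sum_toReal_mul_outDist_toReal :
    ∑ z : A n × B n, (p n z.1).toReal * (outDist p W n s z.2).toReal = 1 := by
  simp only [Fintype.sum_prod_type, ← mul_sum, sum_outDist_toReal, mul_one,
    PMF.sum_toReal_eq_one]

lemma sum_channel_toReal :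
    ∑ z : A n × B n, (W n s z.1 z.2).toReal = Fintype.card (A n) := by
  simp [Fintype.sum_prod_type, PMF.sum_toReal_eq_one]

lemma probEvent_toReal (E : Set (A n × B n)) [DecidablePred (· ∈ E)] :
    (probEvent p W n s E).toReal = ∑ z with z ∈ E, jointProb p W n s z := by
  have hfin (z : A n × B n) : E.indicator (fun z' => p n z'.1 * W n s z'.1 z'.2) z ≠ ⊤ :=
    ((Set.indicator_le_self _ _ z).trans_lt
      (ENNReal.mul_lt_top (PMF.apply_lt_top _ _) (PMF.apply_lt_top _ _))).ne
  rw [probEvent, ENNReal.toReal_sum fun z _ => hfin z, sum_filter]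
  simp only [Set.indicator_apply, apply_ite ENNReal.toReal, ENNReal.toReal_mul,
    ENNReal.toReal_zero, jointProb]

lemma mutualInfo_eq_sum :
    mutualInfo p W n s = ∑ z, jointProb p W n s z * infoDens p W n s z := by
  simp only [mutualInfo, Fintype.sum_prod_type, jointProb, infoDens, ENNReal.toReal_mul]

lemma neg_inv_exp_one_le_sum_jointProb_mul_infoDens (F : Finset (A n × B n)) :
    -(exp 1)⁻¹ ≤ ∑ z ∈ F, jointProb p W n s z * infoDens p W n s z := by
  have hF : ∑ z ∈ F, (p n z.1).toReal * (outDist p W n s z.2).toReal ≤ 1 :=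
    (sum_toReal_mul_outDist_toReal p W n s).le.trans' <|
      sum_le_sum_of_subset_of_nonneg (subset_univ F) fun _ _ _ => by positivity
  calc -(exp 1)⁻¹ ≤ -(∑ z ∈ F, (p n z.1).toReal * (outDist p W n s z.2).toReal / exp 1) := by
        rw [← sum_div, div_eq_mul_inv]
        exact neg_le_neg (mul_le_of_le_one_left (by positivity) hF)
    _ ≤ ∑ z ∈ F, jointProb p W n s z * infoDens p W n s z := by
        rw [← sum_neg_distrib]
        exact sum_le_sum fun z _ => neg_mul_div_exp_one_le_mul_mul_log_div
          ENNReal.toReal_nonneg ENNReal.toReal_nonneg ENNReal.toReal_nonneg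

lemma sum_jointProb_mul_infoDens_le (F : Finset (A n × B n)) :
    ∑ z ∈ F, jointProb p W n s z * infoDens p W n s z ≤
      log (Fintype.card (A n)) * ∑ z ∈ F, jointProb p W n s z + (exp 1)⁻¹ := by
  set m := log (Fintype.card (A n))
  have hW : ∑ z ∈ F, (W n s z.1 z.2).toReal ≤ Fintype.card (A n) :=
    (sum_channel_toReal W n s).le.trans' <|
      sum_le_sum_of_subset_of_nonneg (subset_univ F) fun _ _ _ => ENNReal.toReal_nonneg
  have hcard : (Fintype.card (A n) : ℝ) * exp (-m) ≤ 1 :=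
    mul_exp_neg_log_le_one (Nat.cast_nonneg _)
  calc ∑ z ∈ F, jointProb p W n s z * infoDens p W n s z
      ≤ ∑ z ∈ F, (jointProb p W n s z * m + (W n s z.1 z.2).toReal * (exp (-m) / exp 1)) :=
        sum_le_sum fun z _ => mul_mul_log_div_le ENNReal.toReal_nonneg ENNReal.toReal_nonneg
          (jointProb_le_outDist p W n s z) m
    _ = m * ∑ z ∈ F, jointProb p W n s z +
          (∑ z ∈ F, (W n s z.1 z.2).toReal) * exp (-m) / exp 1 := by
        rw [sum_add_distrib, ← sum_mul, ← sum_mul]; ring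
    _ ≤ m * ∑ z ∈ F, jointProb p W n s z + (exp 1)⁻¹ := by
        gcongr
        rw [div_eq_mul_inv]
        exact mul_le_of_le_one_left (by positivity)
          ((mul_le_mul_of_nonneg_right hW (exp_pos _).le).trans hcard)

lemma mutualInfoRate_eq_sum :
    mutualInfoRate p W n s = ∑ z, jointProb p W n s z * infoDensRate p W n s z := by
  rw [mutualInfoRate, mutualInfo_eq_sum, sum_jointProb_mul_infoDensRate]

lemma neg_inv_exp_one_div_le_sum_jointProb_mul_infoDensRate (F : Finset (A n × B n)) :
    -((exp 1)⁻¹ / n) ≤ ∑ z ∈ F, jointProb p W n s z * infoDensRate p W n s z := by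
  rw [sum_jointProb_mul_infoDensRate, one_div_mul_eq_div, ← neg_div]
  gcongr
  exact neg_inv_exp_one_le_sum_jointProb_mul_infoDens p W n s F

lemma sum_jointProb_mul_infoDensRate_le {κ : ℝ} (hκ : log (Fintype.card (A n)) / n ≤ κ)
    (F : Finset (A n × B n)) :
    ∑ z ∈ F, jointProb p W n s z * infoDensRate p W n s z ≤
      κ * ∑ z ∈ F, jointProb p W n s z + (exp 1)⁻¹ / n := by
  have hF : 0 ≤ ∑ z ∈ F, jointProb p W n s z := sum_nonneg fun z _ => jointProb_nonneg p W n s z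
  rw [sum_jointProb_mul_infoDensRate]
  calc 1 / (n : ℝ) * ∑ z ∈ F, jointProb p W n s z * infoDens p W n s z
      ≤ 1 / (n : ℝ) * (log (Fintype.card (A n)) * ∑ z ∈ F, jointProb p W n s z + (exp 1)⁻¹) := by
        gcongr
        exact sum_jointProb_mul_infoDens_le p W n s F
    _ = log (Fintype.card (A n)) / n * ∑ z ∈ F, jointProb p W n s z + (exp 1)⁻¹ / n := by ring
    _ ≤ κ * ∑ z ∈ F, jointProb p W n s z + (exp 1)⁻¹ / n := by gcongr

lemma neg_inv_exp_one_div_le_mutualInfoRate : -((exp 1)⁻¹ / n) ≤ mutualInfoRate p W n s := by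
  rw [mutualInfoRate_eq_sum]
  exact neg_inv_exp_one_div_le_sum_jointProb_mul_infoDensRate p W n s univ

lemma mutualInfoRate_le {κ : ℝ} (hκ : log (Fintype.card (A n)) / n ≤ κ) :
    mutualInfoRate p W n s ≤ κ + (exp 1)⁻¹ / n := by
  simpa [mutualInfoRate_eq_sum, sum_jointProb] using
    sum_jointProb_mul_infoDensRate_le p W n s hκ univ

lemma mutualInfoRate_ge_of_threshold (R : ℝ) :
    R * (1 - (probEvent p W n s {z | infoDensRate p W n s z ≤ R}).toReal) - (exp 1)⁻¹ / n ≤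
      mutualInfoRate p W n s := by
  classical
  set E : Set (A n × B n) := {z | infoDensRate p W n s z ≤ R}
  have hmass := sum_filter_add_sum_filter_not univ (· ∈ E) (jointProb p W n s)
  have hlow := neg_inv_exp_one_div_le_sum_jointProb_mul_infoDensRate p W n s {z | z ∈ E}
  have hhigh : R * ∑ z with z ∉ E, jointProb p W n s z ≤
      ∑ z with z ∉ E, jointProb p W n s z * infoDensRate p W n s z := by
    rw [mul_sum]
    refine sum_le_sum fun z hz => ?_
    rw [mul_comm]
    exact mul_le_mul_of_nonneg_left (not_le.1 (mem_filter.1 hz).2).le (jointProb_nonneg p W n s z)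
  have hP : 1 - (probEvent p W n s E).toReal = ∑ z with z ∉ E, jointProb p W n s z := by
    rw [probEvent_toReal, ← sum_jointProb p W n s, ← hmass]; ring
  rw [hP, mutualInfoRate_eq_sum, ← sum_filter_add_sum_filter_not univ (· ∈ E)]
  exact (add_le_add hlow hhigh).trans_eq' (by ring)

lemma mutualInfoRate_le_of_threshold {κ : ℝ} (hκ : log (Fintype.card (A n)) / n ≤ κ) (R : ℝ) :
    mutualInfoRate p W n s ≤
      R * (1 - (probEvent p W n s {z | R ≤ infoDensRate p W n s z}).toReal) +
        κ * (probEvent p W n s {z | R ≤ infoDensRate p W n s z}).toReal + (exp 1)⁻¹ / n := by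
  classical
  set E : Set (A n × B n) := {z | R ≤ infoDensRate p W n s z}
  have hmass := sum_filter_add_sum_filter_not univ (· ∈ E) (jointProb p W n s)
  have htail := sum_jointProb_mul_infoDensRate_le p W n s hκ {z | z ∈ E}
  have hlow : ∑ z with z ∉ E, jointProb p W n s z * infoDensRate p W n s z ≤
      R * ∑ z with z ∉ E, jointProb p W n s z := by
    rw [mul_sum]
    refine sum_le_sum fun z hz => ?_
    rw [mul_comm R]
    exact mul_le_mul_of_nonneg_left (not_le.1 (mem_filter.1 hz).2).le (jointProb_nonneg p W n s z)
  have hP : 1 - (probEvent p W n s E).toReal = ∑ z with z ∉ E, jointProb p W n s z := by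
    rw [probEvent_toReal, ← sum_jointProb p W n s, ← hmass]; ring
  rw [hP, probEvent_toReal, mutualInfoRate_eq_sum, ← sum_filter_add_sum_filter_not univ (· ∈ E)]
  exact (add_le_add htail hlow).trans_eq (by ring)

end Blocklength

lemma ENNReal.exists_tendsto_zero_toReal_le_of_tendsto_iSup {α ι : Type*} {l : Filter α}
    {a : α → ι → ℝ≥0∞} (h : Tendsto (fun x => ⨆ i, a x i) l (𝓝 0)) :
    ∃ δ : α → ℝ, Tendsto δ l (𝓝 0) ∧ ∀ᶠ x in l, ∀ i, (a x i).toReal ≤ δ x := by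
  refine ⟨fun x => (⨆ i, a x i).toReal, ?_, ?_⟩
  · simpa [Function.comp_def] using (ENNReal.tendsto_toReal ENNReal.zero_ne_top).comp h
  · filter_upwards [h.eventually (eventually_lt_nhds ENNReal.zero_lt_top)] with x hx i
    exact ENNReal.toReal_mono hx.ne (le_iSup (a x) i)

lemma log_card_fun_fin_div_le (𝒳 : Type*) [Fintype 𝒳] (n : ℕ) :
    log (Fintype.card (Fin n → 𝒳)) / n ≤ log (Fintype.card 𝒳) := by
  rw [Fintype.card_fun, Fintype.card_fin, Nat.cast_pow, log_pow]
  rcases n.eq_zero_or_pos with rfl | hn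
  · simpa using log_natCast_nonneg _
  · rw [mul_div_cancel_left₀ _ (by positivity)]

section Asymptotics

variable [∀ n, Fintype (A n)] [∀ n, Fintype (B n)] {p : ∀ n, PMF (A n)}
  {W : ∀ n, S → A n → PMF (B n)} {κ : ℝ}

lemma bddBelow_range_mutualInfoRate (n : ℕ) : BddBelow (Set.range (mutualInfoRate p W n)) :=
  ⟨_, Set.forall_mem_range.2 (neg_inv_exp_one_div_le_mutualInfoRate p W n)⟩

lemma bddAbove_range_mutualInfoRate {n : ℕ} (hκ : log (Fintype.card (A n)) / n ≤ κ) :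
    BddAbove (Set.range (mutualInfoRate p W n)) :=
  ⟨_, Set.forall_mem_range.2 fun s => mutualInfoRate_le p W n s hκ⟩

variable [Nonempty S]

lemma isBoundedUnder_ge_iInf_mutualInfoRate :
    IsBoundedUnder (· ≥ ·) atTop fun n => ⨅ s, mutualInfoRate p W n s :=
  (tendsto_const_div_atTop_nhds_zero_nat _).neg.isBoundedUnder_ge.mono_ge <|
    Eventually.of_forall fun n => le_ciInf (neg_inv_exp_one_div_le_mutualInfoRate p W n)

lemma isBoundedUnder_le_iSup_mutualInfoRate (hκ : ∀ n, log (Fintype.card (A n)) / n ≤ κ) :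
    IsBoundedUnder (· ≤ ·) atTop fun n => ⨆ s, mutualInfoRate p W n s :=
  ((tendsto_const_div_atTop_nhds_zero_nat _).const_add κ).isBoundedUnder_le.mono_le <|
    Eventually.of_forall fun n => ciSup_le fun s => mutualInfoRate_le p W n s (hκ n)

lemma iInf_mutualInfoRate_le_iSup (hκ : ∀ n, log (Fintype.card (A n)) / n ≤ κ) (n : ℕ) :
    ⨅ s, mutualInfoRate p W n s ≤ ⨆ s, mutualInfoRate p W n s :=
  ciInf_le_ciSup (bddBelow_range_mutualInfoRate n) (bddAbove_range_mutualInfoRate (hκ n))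

lemma liminf_iInf_mutualInfoRate_le_limsup_iSup (hκ : ∀ n, log (Fintype.card (A n)) / n ≤ κ) :
    liminf (fun n => ⨅ s, mutualInfoRate p W n s) atTop ≤
      limsup (fun n => ⨆ s, mutualInfoRate p W n s) atTop := by
  have hle := Eventually.of_forall (f := atTop) (iInf_mutualInfoRate_le_iSup (p := p) (W := W) hκ)
  exact (liminf_le_limsup ((isBoundedUnder_le_iSup_mutualInfoRate hκ).mono_le hle)
    isBoundedUnder_ge_iInf_mutualInfoRate).trans
    (limsup_le_limsup hle isBoundedUnder_ge_iInf_mutualInfoRate.isCoboundedUnder_le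
      (isBoundedUnder_le_iSup_mutualInfoRate hκ))

lemma le_liminf_iInf_mutualInfoRate (hκ : ∀ n, log (Fintype.card (A n)) / n ≤ κ) {R : ℝ}
    (hR : R ∈ cinfISet p W) : R ≤ liminf (fun n => ⨅ s, mutualInfoRate p W n s) atTop := by
  obtain ⟨δ, hδ, hPδ⟩ := ENNReal.exists_tendsto_zero_toReal_le_of_tendsto_iSup hR
  have hlim : Tendsto (fun n : ℕ => R - |R| * δ n - (exp 1)⁻¹ / n) atTop (𝓝 R) := by
    simpa using (tendsto_const_nhds.sub (hδ.const_mul |R|)).sub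
      (tendsto_const_div_atTop_nhds_zero_nat (exp 1)⁻¹)
  have hbound : ∀ᶠ n in atTop, R - |R| * δ n - (exp 1)⁻¹ / n ≤ ⨅ s, mutualInfoRate p W n s := by
    filter_upwards [hPδ] with n hn
    refine le_ciInf fun s => (mutualInfoRate_ge_of_threshold p W n s R).trans' ?_
    have := mul_le_mul (le_abs_self R) (hn s) ENNReal.toReal_nonneg (abs_nonneg R)
    linarith
  calc R = liminf (fun n : ℕ => R - |R| * δ n - (exp 1)⁻¹ / n) atTop := hlim.liminf_eq.symm
    _ ≤ _ := liminf_le_liminf hbound hlim.isBoundedUnder_ge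
      ((isBoundedUnder_le_iSup_mutualInfoRate hκ).mono_le
        (Eventually.of_forall (iInf_mutualInfoRate_le_iSup hκ))).isCoboundedUnder_ge

lemma limsup_iSup_mutualInfoRate_le (hκ : ∀ n, log (Fintype.card (A n)) / n ≤ κ) {R : ℝ}
    (hR : R ∈ csupISet p W) : limsup (fun n => ⨆ s, mutualInfoRate p W n s) atTop ≤ R := by
  obtain ⟨δ, hδ, hPδ⟩ := ENNReal.exists_tendsto_zero_toReal_le_of_tendsto_iSup hR
  have hlim : Tendsto (fun n : ℕ => R + |κ - R| * δ n + (exp 1)⁻¹ / n) atTop (𝓝 R) := by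
    simpa using (tendsto_const_nhds.add (hδ.const_mul |κ - R|)).add
      (tendsto_const_div_atTop_nhds_zero_nat (exp 1)⁻¹)
  have hbound : ∀ᶠ n in atTop, ⨆ s, mutualInfoRate p W n s ≤ R + |κ - R| * δ n + (exp 1)⁻¹ / n := by
    filter_upwards [hPδ] with n hn
    refine ciSup_le fun s => (mutualInfoRate_le_of_threshold p W n s (hκ n) R).trans ?_
    have := mul_le_mul (le_abs_self (κ - R)) (hn s) ENNReal.toReal_nonneg (abs_nonneg _)
    linarith
  calc limsup (fun n => ⨆ s, mutualInfoRate p W n s) atTop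
      ≤ limsup (fun n : ℕ => R + |κ - R| * δ n + (exp 1)⁻¹ / n) atTop :=
        limsup_le_limsup hbound
          (isBoundedUnder_ge_iInf_mutualInfoRate.mono_ge
            (Eventually.of_forall (iInf_mutualInfoRate_le_iSup hκ))).isCoboundedUnder_le
          hlim.isBoundedUnder_le
    _ = R := hlim.limsup_eq

end Asymptotics

theorem cinf_liminf_limsup_csup_chain_general {S : Type*} [Nonempty S]
    {𝒳 𝒴 : Type*} [Fintype 𝒳] [Fintype 𝒴]
    (p : ∀ n : ℕ, PMF (Fin n → 𝒳)) (W : ∀ n : ℕ, S → (Fin n → 𝒳) → PMF (Fin n → 𝒴))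
    (hfin₁ : (cinfISet p W).Nonempty)
    (hfin₃ : (csupISet p W).Nonempty) :
    cinfI p W ≤
        Filter.liminf (fun n : ℕ => ⨅ s : S, (1 / (n : ℝ)) * mutualInfo p W n s) atTop ∧
      Filter.liminf (fun n : ℕ => ⨅ s : S, (1 / (n : ℝ)) * mutualInfo p W n s) atTop ≤
        Filter.limsup (fun n : ℕ => ⨆ s : S, (1 / (n : ℝ)) * mutualInfo p W n s) atTop ∧
      Filter.limsup (fun n : ℕ => ⨆ s : S, (1 / (n : ℝ)) * mutualInfo p W n s) atTop ≤
        csupI p W := by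
  have hκ := log_card_fun_fin_div_le 𝒳
  exact ⟨csSup_le hfin₁ fun R hR => le_liminf_iInf_mutualInfoRate hκ hR,
    liminf_iInf_mutualInfoRate_le_limsup_iSup hκ,
    le_csInf hfin₃ fun R hR => limsup_iSup_mutualInfoRate_le hκ hR⟩

/-- with per-symbol alphabets `A_n = 𝒳ⁿ`, `B_n = 𝒴ⁿ` and `cinf I(X;Y)`,
`csup I(X;Y)` finite, one has
`cinf I(X;Y) ≤ liminf_n inf_s (1/n)·I(Xⁿ;Yⁿ|s) ≤ limsup_n sup_s (1/n)·I(Xⁿ;Yⁿ|s) ≤ csup I(X;Y)`. -/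
theorem cinf_liminf_limsup_csup_chain {S : Type*} [Nonempty S]
    {𝒳 𝒴 : Type*} [Fintype 𝒳] [Nonempty 𝒳] [Fintype 𝒴] [Nonempty 𝒴]
    (p : ∀ n : ℕ, PMF (Fin n → 𝒳)) (W : ∀ n : ℕ, S → (Fin n → 𝒳) → PMF (Fin n → 𝒴))
    (hfin₁ : (cinfISet p W).Nonempty) (hfin₂ : BddAbove (cinfISet p W))
    (hfin₃ : (csupISet p W).Nonempty) (hfin₄ : BddBelow (csupISet p W)) :
    cinfI p W ≤
        Filter.liminf (fun n : ℕ => ⨅ s : S, (1 / (n : ℝ)) * mutualInfo p W n s) atTop ∧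
      Filter.liminf (fun n : ℕ => ⨅ s : S, (1 / (n : ℝ)) * mutualInfo p W n s) atTop ≤
        Filter.limsup (fun n : ℕ => ⨆ s : S, (1 / (n : ℝ)) * mutualInfo p W n s) atTop ∧
      Filter.limsup (fun n : ℕ => ⨆ s : S, (1 / (n : ℝ)) * mutualInfo p W n s) atTop ≤
        csupI p W :=
  cinf_liminf_limsup_csup_chain_general p W hfin₁ hfin₃

end
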